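/- arXiv:2512.08828 — 2 statements merged into one kernel-verified Lean document; each statement's English description precedes it below -/
import Mathlib

section
/- Quantile monotonicity under point-mass replacement: let w_1, ..., w_m, w_∞ be nonnegative weights summing to 1, let v_1, ..., v_m be reals, and let v' ∈ ℝ. If w_∞ ≥ w_K for some index K ∈ {1, ..., m}, then Q_{1−α}(Σ_{k≠K} w_k δ_{v_k} + w_K δ_{v_K} + w_∞ δ_{+∞}) ≥ Q_{1−α}(Σ_{k≠K} w_k δ_{v_k} + w_K δ_{v'} + w_∞ δ_{v_K}), where δ_{+∞} denotes a point mass dominating every real number. -/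
open Finset

/-- The (1−α)-quantile `inf{t : F t ≥ 1−α}` of a CDF-like function, as an
extended real (`⊤` when the set is empty, i.e. a quantile at `+∞`). -/
noncomputable def quantileOfCDF (F : ℝ → ℝ) (α : ℝ) : EReal :=
  sInf ((fun t : ℝ => (t : EReal)) '' {t : ℝ | 1 - α ≤ F t})

/-- Quantile monotonicity under point-mass replacement (Lemma 1 of the paper):
with nonnegative weights `w₁,…,w_m, w_∞` summing to 1 and `w_∞ ≥ w_K`, the
(1−α)-quantile of `Σ_{k≠K} w_k δ_{v_k} + w_K δ_{v_K} + w_∞ δ_{+∞}` is at least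
the (1−α)-quantile of `Σ_{k≠K} w_k δ_{v_k} + w_K δ_{v'} + w_∞ δ_{v_K}`. -/
theorem quantile_point_mass_replacement {m : ℕ} (w : Fin m → ℝ) (wInf : ℝ)
    (v : Fin m → ℝ) (v' : ℝ) (K : Fin m) (α : ℝ) (hα0 : 0 < α) (hα1 : α < 1)
    (hw : ∀ k, 0 ≤ w k) (hwInf : 0 ≤ wInf)
    (hsum : ∑ k, w k + wInf = 1) (hKle : w K ≤ wInf) :
    quantileOfCDF
        (fun t => (∑ k ∈ Finset.univ.erase K with v k ≤ t, w k) +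
          (if v' ≤ t then w K else 0) + (if v K ≤ t then wInf else 0)) α ≤
      quantileOfCDF
        (fun t => (∑ k ∈ Finset.univ.erase K with v k ≤ t, w k) +
          (if v K ≤ t then w K else 0)) α := by
  apply sInf_le_sInf
  apply Set.image_mono
  intro t ht
  simp only [Set.mem_setOf_eq] at *
  have h : (if v K ≤ t then w K else 0) ≤
      (if v' ≤ t then w K else 0) + (if v K ≤ t then wInf else 0) := by
    split_ifs <;> linarith [hw K]
  linarith
end

section
/- Key chain inequality from the coverage proof: with K ∼ Σ_k w̃_k δ_k (finite index set 𝒦, weights summing to 1), and events E_k (for each index k) measurable with respect to random vectors V(Z^k), where K is drawn independently of the V's: P(K ∈ S(V(Z^K))) = Σ_k w̃_k P(k ∈ S(V(Z^k))) ≤ Σ_k w̃_k [P(k ∈ S(V(Z))) + d_TV(V(Z), V(Z^k))] = E[Σ_{k ∈ S(V(Z))} w̃_k] + Σ_k w̃_k d_TV(V(Z), V(Z^k)) ≤ α + Σ_k w̃_k d_TV(V(Z), V(Z^k)). -/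
open MeasureTheory Finset

/-- Weighted (1−α)-quantile of the discrete distribution `Σ_k w k δ_{r k}`. -/
noncomputable def Qw {ι : Type*} [Fintype ι] (w : ι → ℝ) (α : ℝ) (r : ι → ℝ) : ℝ :=
  open Classical in
  sInf {t : ℝ | 1 - α ≤ ∑ k, if r k ≤ t then w k else 0}

/-- The set of "strange" indices of a vector `r`. -/
def strangeSet {ι : Type*} [Fintype ι] (w : ι → ℝ) (α : ℝ) (r : ι → ℝ) : Set ι :=
  {k | Qw w α r < r k}

/-- Total variation distance between two measures. -/
noncomputable def tvDist {β : Type*} [MeasurableSpace β] (P Q : Measure β) : ℝ :=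
  ⨆ A : {s : Set β // MeasurableSet s}, |(P A.1).toReal - (Q A.1).toReal|

/-! The strange-point set is at most an `α`-fraction of the weight: the quantile `Qw` is an atom
`r j` at which the cumulative weight already reaches `1 - α`, so the atoms strictly above it carry
weight at most `α`. In expectation this survives any randomisation of `r`, and replacing the law of
`V k` by that of `V₀` costs at most their total variation distance per index. -/

section Quantile

variable {ι : Type*} [Fintype ι] {w r : ι → ℝ} {α : ℝ}

noncomputable def weightedCDF (w r : ι → ℝ) (t : ℝ) : ℝ :=
  ∑ k, if r k ≤ t then w k else 0

theorem Qw_eq_sInf : Qw w α r = sInf {t | 1 - α ≤ weightedCDF w r t} := rfl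

theorem exists_weightedCDF_apply_eq {t : ℝ} (h : ∃ j, r j ≤ t) :
    ∃ j, r j ≤ t ∧ weightedCDF w r (r j) = weightedCDF w r t := by
  obtain ⟨j₀, hj₀⟩ := h
  obtain ⟨j, hjt, hjmax⟩ :=
    exists_max_image (univ.filter fun j => r j ≤ t) r ⟨j₀, by simpa using hj₀⟩
  simp only [mem_filter, mem_univ, true_and] at hjt hjmax
  exact ⟨j, hjt, sum_congr rfl fun k _ => if_congr ⟨fun h => h.trans hjt, hjmax k⟩ rfl rfl⟩

theorem exists_isLeast_weightedCDF_superlevel (hsum : ∑ k, w k = 1) (hα0 : 0 ≤ α)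
    (hα1 : α < 1) : ∃ j, IsLeast {t | 1 - α ≤ weightedCDF w r t} (r j) := by
  have : Nonempty ι := by
    by_contra h
    simp [not_nonempty_iff.mp h] at hsum
  set G := univ.filter fun j => 1 - α ≤ weightedCDF w r (r j)
  have hG : G.Nonempty := by
    obtain ⟨jmax, -, hjmax⟩ := exists_max_image univ r univ_nonempty
    refine ⟨jmax, mem_filter.mpr ⟨mem_univ _, ?_⟩⟩
    have : weightedCDF w r (r jmax) = ∑ k, w k :=
      sum_congr rfl fun k _ => if_pos (hjmax k (mem_univ k))
    linarith
  obtain ⟨i, hiG, hi⟩ := exists_min_image G r hG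
  refine ⟨i, (mem_filter.mp hiG).2, fun t (ht : 1 - α ≤ weightedCDF w r t) => ?_⟩
  have hatom : ∃ j, r j ≤ t := by
    by_contra! h
    have : weightedCDF w r t = 0 := sum_eq_zero fun k _ => if_neg (h k).not_ge
    linarith
  obtain ⟨j, hjt, hj⟩ := exists_weightedCDF_apply_eq (w := w) hatom
  exact (hi j (mem_filter.mpr ⟨mem_univ _, hj ▸ ht⟩)).trans hjt

theorem one_sub_le_weightedCDF_Qw (hsum : ∑ k, w k = 1) (hα0 : 0 ≤ α) (hα1 : α < 1) :
    1 - α ≤ weightedCDF w r (Qw w α r) := by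
  obtain ⟨i, hi⟩ := exists_isLeast_weightedCDF_superlevel (r := r) hsum hα0 hα1
  rw [Qw_eq_sInf, hi.csInf_eq]
  exact hi.1

theorem Qw_lt_iff (hsum : ∑ k, w k = 1) (hα0 : 0 ≤ α) (hα1 : α < 1) {c : ℝ} :
    Qw w α r < c ↔ ∃ j, 1 - α ≤ weightedCDF w r (r j) ∧ r j < c := by
  obtain ⟨i, hi⟩ := exists_isLeast_weightedCDF_superlevel (r := r) hsum hα0 hα1
  rw [Qw_eq_sInf, hi.csInf_eq]
  exact ⟨fun h => ⟨i, hi.1, h⟩, fun ⟨j, hj, hjc⟩ => (hi.2 hj).trans_lt hjc⟩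

theorem sum_indicator_strangeSet_le (hsum : ∑ k, w k = 1) (hα0 : 0 ≤ α) (hα1 : α < 1) :
    ∑ k, (strangeSet w α r).indicator w k ≤ α := by
  have hsplit : weightedCDF w r (Qw w α r) + ∑ k, (strangeSet w α r).indicator w k = 1 := by
    rw [weightedCDF, ← sum_add_distrib, ← hsum]
    refine sum_congr rfl fun k _ => ?_
    by_cases h : r k ≤ Qw w α r
    · simp [h, strangeSet]
    · simp [h, strangeSet, lt_of_not_ge h]
  linarith [one_sub_le_weightedCDF_Qw (r := r) hsum hα0 hα1]

theorem measurableSet_setOf_mem_strangeSet (hsum : ∑ k, w k = 1) (hα0 : 0 ≤ α) (hα1 : α < 1)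
    (k : ι) : MeasurableSet {r : ι → ℝ | k ∈ strangeSet w α r} := by
  have hset : {r : ι → ℝ | k ∈ strangeSet w α r} =
      ⋃ j, {r | 1 - α ≤ weightedCDF w r (r j)} ∩ {r | r j < r k} := by
    ext r
    simp only [strangeSet, Set.mem_ofPred_eq, Qw_lt_iff hsum hα0 hα1, Set.mem_iUnion,
      Set.mem_inter_iff]
  rw [hset]
  refine .iUnion fun j => .inter (measurableSet_le measurable_const ?_)
    (measurableSet_lt (measurable_pi_apply j) (measurable_pi_apply k))
  exact Finset.measurable_sum _ fun k' _ => Measurable.ite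
    (measurableSet_le (measurable_pi_apply k') (measurable_pi_apply j))
    measurable_const measurable_const

end Quantile

theorem measureReal_le_add_tvDist {β : Type*} [MeasurableSpace β] (P Q : Measure β)
    [IsFiniteMeasure P] [IsFiniteMeasure Q] {A : Set β} (hA : MeasurableSet A) :
    Q.real A ≤ P.real A + tvDist P Q := by
  change _ ≤ _ + ⨆ B : {s : Set β // MeasurableSet s}, |P.real B.1 - Q.real B.1|
  have hbdd : BddAbove (Set.range fun B : {s : Set β // MeasurableSet s} =>
      |P.real B.1 - Q.real B.1|) := by
    refine ⟨P.real Set.univ + Q.real Set.univ, ?_⟩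
    rintro _ ⟨B, rfl⟩
    have hP : P.real B.1 ≤ P.real Set.univ := measureReal_mono (Set.subset_univ _)
    have hQ : Q.real B.1 ≤ Q.real Set.univ := measureReal_mono (Set.subset_univ _)
    have : 0 ≤ P.real B.1 := measureReal_nonneg
    have : 0 ≤ Q.real B.1 := measureReal_nonneg
    exact abs_sub_le_iff.mpr ⟨by linarith, by linarith⟩
  have hA' := le_ciSup hbdd ⟨A, hA⟩
  have := neg_abs_le (P.real A - Q.real A)
  linarith

theorem measureReal_setOf_mem_le_sum_inter {Ω ι : Type*} [MeasurableSpace Ω] [Fintype ι]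
    (μ : Measure Ω) [IsFiniteMeasure μ] (K : Ω → ι) (E : ι → Set Ω) :
    μ.real {ω | ω ∈ E (K ω)} ≤ ∑ k, μ.real ({ω | K ω = k} ∩ E k) :=
  calc μ.real {ω | ω ∈ E (K ω)}
      ≤ μ.real (⋃ k, {ω | K ω = k} ∩ E k) :=
        measureReal_mono fun ω hω => Set.mem_iUnion.mpr ⟨K ω, rfl, hω⟩
    _ ≤ ∑ k, μ.real ({ω | K ω = k} ∩ E k) := measureReal_iUnion_fintype_le _

theorem sum_mul_measureReal_le_of_forall_sum_indicator_le {Ω ι : Type*} [MeasurableSpace Ω]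
    [Fintype ι] {μ : Measure Ω} [IsProbabilityMeasure μ] {w : ι → ℝ} {S : Ω → Set ι}
    (hS : ∀ k, MeasurableSet {ω | k ∈ S ω}) {c : ℝ}
    (hc : ∀ ω, ∑ k, (S ω).indicator w k ≤ c) :
    ∑ k, w k * μ.real {ω | k ∈ S ω} ≤ c := by
  have hint : ∀ k, Integrable ({ω | k ∈ S ω}.indicator fun _ => w k) μ :=
    fun k => (integrable_const (w k)).indicator (hS k)
  calc ∑ k, w k * μ.real {ω | k ∈ S ω}
      = ∫ ω, ∑ k, {ω | k ∈ S ω}.indicator (fun _ => w k) ω ∂μ := by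
        rw [integral_finsetSum _ fun k _ => hint k]
        exact sum_congr rfl fun k _ => by rw [integral_indicator_const _ (hS k), smul_eq_mul,
          mul_comm]
    _ ≤ ∫ _, c ∂μ :=
        integral_mono (integrable_finsetSum _ fun k _ => hint k) (integrable_const c) hc
    _ = c := by simp

theorem strange_point_chain_inequality_general {ι Ω : Type*} [Fintype ι]
    [MeasurableSpace Ω]
    (μ : Measure Ω) [IsProbabilityMeasure μ]
    (w : ι → ℝ) (hw : ∀ k, 0 ≤ w k) (hsum : ∑ k, w k = 1)
    (α : ℝ) (hα0 : 0 < α) (hα1 : α < 1)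
    (K : Ω → ι)
    (V : ι → Ω → (ι → ℝ)) (hV : ∀ k, Measurable (V k))
    (V₀ : Ω → (ι → ℝ)) (hV₀ : Measurable V₀)
    (hKindep : ∀ k : ι,
      (μ ({ω | K ω = k} ∩ {ω | k ∈ strangeSet w α (V k ω)})).toReal =
        w k * (μ {ω | k ∈ strangeSet w α (V k ω)}).toReal) :
    (μ {ω | K ω ∈ strangeSet w α (V (K ω) ω)}).toReal ≤
      α + ∑ k, w k * tvDist (μ.map V₀) (μ.map (V k)) := by
  have hS (k : ι) : MeasurableSet {r : ι → ℝ | k ∈ strangeSet w α r} :=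
    measurableSet_setOf_mem_strangeSet hsum hα0.le hα1 k
  have hTV (k : ι) : μ.real {ω | k ∈ strangeSet w α (V k ω)} ≤
      μ.real {ω | k ∈ strangeSet w α (V₀ ω)} + tvDist (μ.map V₀) (μ.map (V k)) := by
    have h := measureReal_le_add_tvDist (μ.map V₀) (μ.map (V k)) (hS k)
    rwa [map_measureReal_apply (hV k) (hS k), map_measureReal_apply hV₀ (hS k)] at h
  have hmass : ∑ k, w k * μ.real {ω | k ∈ strangeSet w α (V₀ ω)} ≤ α :=
    sum_mul_measureReal_le_of_forall_sum_indicator_le (fun k => hV₀ (hS k))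
      fun ω => sum_indicator_strangeSet_le hsum hα0.le hα1
  calc μ.real {ω | K ω ∈ strangeSet w α (V (K ω) ω)}
      ≤ ∑ k, μ.real ({ω | K ω = k} ∩ {ω | k ∈ strangeSet w α (V k ω)}) :=
        measureReal_setOf_mem_le_sum_inter μ K fun k => {ω | k ∈ strangeSet w α (V k ω)}
    _ = ∑ k, w k * μ.real {ω | k ∈ strangeSet w α (V k ω)} :=
        sum_congr rfl fun k _ => hKindep k
    _ ≤ ∑ k, w k * (μ.real {ω | k ∈ strangeSet w α (V₀ ω)} +
          tvDist (μ.map V₀) (μ.map (V k))) :=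
        sum_le_sum fun k _ => mul_le_mul_of_nonneg_left (hTV k) (hw k)
    _ = ∑ k, w k * μ.real {ω | k ∈ strangeSet w α (V₀ ω)} +
          ∑ k, w k * tvDist (μ.map V₀) (μ.map (V k)) := by
        simp only [mul_add, sum_add_distrib]
    _ ≤ α + ∑ k, w k * tvDist (μ.map V₀) (μ.map (V k)) := by gcongr

/-- Key chain inequality from the coverage proof:
`P(K ∈ S(V(Z^K))) ≤ α + Σ_k w̃_k · d_TV(V(Z), V(Z^k))`. -/
theorem strange_point_chain_inequality {ι Ω : Type*} [Fintype ι]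
    [MeasurableSpace ι] [MeasurableSpace Ω]
    (μ : Measure Ω) [IsProbabilityMeasure μ]
    (w : ι → ℝ) (hw : ∀ k, 0 ≤ w k) (hsum : ∑ k, w k = 1)
    (α : ℝ) (hα0 : 0 < α) (hα1 : α < 1)
    (K : Ω → ι) (hK : Measurable K)
    (V : ι → Ω → (ι → ℝ)) (hV : ∀ k, Measurable (V k))
    (V₀ : Ω → (ι → ℝ)) (hV₀ : Measurable V₀)
    (hKdist : ∀ k, μ {ω | K ω = k} = ENNReal.ofReal (w k))
    (hKindep : ∀ k : ι,
      (μ ({ω | K ω = k} ∩ {ω | k ∈ strangeSet w α (V k ω)})).toReal =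
        w k * (μ {ω | k ∈ strangeSet w α (V k ω)}).toReal) :
    (μ {ω | K ω ∈ strangeSet w α (V (K ω) ω)}).toReal ≤
      α + ∑ k, w k * tvDist (μ.map V₀) (μ.map (V k)) :=
  strange_point_chain_inequality_general μ w hw hsum α hα0 hα1 K V hV V₀ hV₀ hKindep
end
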